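/- Over a field F of characteristic zero, a three-dimensional Lie algebra L has a plus-minus pair if and only if L is generated as a Lie algebra by two elements. -/

import Mathlib

set_option maxHeartbeats 1000000
set_option synthInstance.maxHeartbeats 400000

open UniversalEnvelopingAlgebra Module Submodule


section Helpers
variable {F : Type*} [Field F] {L : Type*} [AddCommGroup L] [Module F L] [Module.Finite F L]

omit [Module.Finite F L] in
lemma exists_notMem_of_ne_top (W : Submodule F L) (h : W ≠ ⊤) : ∃ z, z ∉ W := by
  by_contra h'
  push_neg at h'
  exact h (Submodule.eq_top_iff'.mpr h')

omit [Module.Finite F L] in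
lemma finrank_span_singleton_le (v : L) : finrank F (span F ({v} : Set L)) ≤ 1 := by
  by_cases hv : v = 0
  · have : span F ({v} : Set L) = ⊥ := by simp [hv]
    rw [this]
    simp
  · rw [finrank_span_singleton hv]

lemma finrank_span_pair_le (v w : L) : finrank F (span F ({v, w} : Set L)) ≤ 2 := by
  have h1 : span F ({v, w} : Set L) = span F {v} ⊔ span F {w} := by
    rw [show ({v, w} : Set L) = {v} ∪ {w} by rw [Set.singleton_union], Submodule.span_union]
  have h2 := Submodule.finrank_sup_add_finrank_inf_eq (span F ({v} : Set L)) (span F ({w} : Set L))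
  have h3 := finrank_span_singleton_le (F := F) v
  have h4 := finrank_span_singleton_le (F := F) w
  rw [h1]
  omega

omit [Module.Finite F L] in
lemma fr_pair {v w : L} (h : LinearIndependent F ![v, w]) :
    finrank F (span F ({v, w} : Set L)) = 2 := by
  have hr : Set.range ![v, w] = {v, w} := by
    ext u
    simp [Fin.exists_fin_two]
    tauto
  have := finrank_span_eq_card h
  rw [hr] at this
  simpa using this

lemma helperA (W : Submodule F L) (hW : finrank F W ≤ 2) : ∃ v w : L, W ≤ span F {v, w} := by
  have hfb := Module.finBasis F W
  have h1 : span F (W.subtype '' Set.range hfb) = W := by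
    rw [← Submodule.map_span, hfb.span_eq, Submodule.map_top, Submodule.range_subtype]
  have h1' : span F (Set.range fun i => ((hfb i : W) : L)) = W := by
    rw [show (Set.range fun i => ((hfb i : W) : L)) = W.subtype '' Set.range hfb by
      rw [← Set.range_comp]; rfl]
    exact h1
  refine ⟨if h : 0 < finrank F W then ((hfb ⟨0, h⟩ : W) : L) else 0,
          if h : 1 < finrank F W then ((hfb ⟨1, h⟩ : W) : L) else 0, ?_⟩
  refine le_trans (le_of_eq h1'.symm) (Submodule.span_mono ?_)
  rintro u ⟨i, rfl⟩
  have hi : (i : ℕ) = 0 ∨ (i : ℕ) = 1 := by omega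
  rcases hi with hi | hi
  · have hieq : i = ⟨0, by omega⟩ := Fin.ext hi
    rw [hieq]
    left
    rw [dif_pos (by omega : 0 < finrank F W)]
  · have hieq : i = ⟨1, by omega⟩ := Fin.ext hi
    rw [hieq]
    right
    rw [Set.mem_singleton_iff, dif_pos (by omega : 1 < finrank F W)]

lemma helperB (hdim : 3 ≤ finrank F L) (v w : L) :
    ∃ v' w', LinearIndependent F ![v', w'] ∧ span F ({v, w} : Set L) ≤ span F {v', w'} := by
  have hsingle : ∀ u : L, ∃ v' w', LinearIndependent F ![v', w'] ∧
      span F ({u} : Set L) ≤ span F {v', w'} := by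
    intro u
    have hpick : ∀ u' : L, u' ≠ 0 → ∃ w', LinearIndependent F ![u', w'] := by
      intro u' hu'
      have hne : span F ({u'} : Set L) ≠ ⊤ := by
        intro h
        have := finrank_span_singleton_le (F := F) u'
        rw [h, finrank_top] at this
        omega
      obtain ⟨w', hw'⟩ := exists_notMem_of_ne_top _ hne
      refine ⟨w', (LinearIndependent.pair_iff' hu').mpr fun a ha => hw' ?_⟩
      rw [← ha]
      exact Submodule.smul_mem _ _ (Submodule.mem_span_singleton_self u')
    by_cases hu : u = 0
    · have hbot : (⊥ : Submodule F L) ≠ ⊤ := by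
        intro h
        have h2 : finrank F (⊥ : Submodule F L) = finrank F L := by rw [h, finrank_top]
        simp at h2
        omega
      obtain ⟨v', hv'⟩ := exists_notMem_of_ne_top _ hbot
      have hv'0 : v' ≠ 0 := by simpa using hv'
      obtain ⟨w', hw'⟩ := hpick v' hv'0
      exact ⟨v', w', hw', by simp [hu]⟩
    · obtain ⟨w', hw'⟩ := hpick u hu
      refine ⟨u, w', hw', Submodule.span_mono ?_⟩
      simp
  by_cases hind : LinearIndependent F ![v, w]
  · exact ⟨v, w, hind, le_rfl⟩
  · by_cases hv : v = 0
    · obtain ⟨v', w', h1, h2⟩ := hsingle w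
      refine ⟨v', w', h1, le_trans ?_ h2⟩
      rw [Submodule.span_le]
      rintro u (rfl | rfl)
      · simp [hv]
      · exact Submodule.subset_span rfl
    · have : ∃ a : F, a • v = w := by
        by_contra hc
        push_neg at hc
        exact hind ((LinearIndependent.pair_iff' hv).mpr hc)
      obtain ⟨a, ha⟩ := this
      obtain ⟨v', w', h1, h2⟩ := hsingle v
      refine ⟨v', w', h1, le_trans ?_ h2⟩
      rw [Submodule.span_le]
      rintro u (rfl | rfl)
      · exact Submodule.subset_span rfl
      · rw [← ha]
        exact Submodule.smul_mem _ _ (Submodule.subset_span rfl)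

end Helpers



section Machinery
variable {F : Type*} [Field F] [CharZero F] {A : Type*} [Ring A] [Algebra F A]

def Smon (F : Type*) [Field F] {A : Type*} [Ring A] [Algebra F A] (X Y : A) : Submodule F A :=
  Submodule.span F {u | ∃ a b c : ℕ, u = X^a * (Y^b * X^c)}

variable {X Y Z : A}

omit [CharZero F] in
lemma mono_mem (a b c : ℕ) : X^a * (Y^b * X^c) ∈ Smon F X Y :=
  Submodule.subset_span ⟨a, b, c, rfl⟩

omit [CharZero F] in
lemma swapXY (hZ : Z = X*Y - Y*X) (r : A) : X * (Y * r) = Y * (X * r) + Z * r := by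
  rw [hZ]; noncomm_ring

omit [CharZero F] in
lemma swapYX (hZ : Z = X*Y - Y*X) (r : A) : Y * (X * r) = X * (Y * r) - Z * r := by
  rw [hZ]; noncomm_ring

omit [CharZero F] in
lemma swapZX {a₁ b₁ c₁ : F} (hXZ : X*Z - Z*X = a₁•X + b₁•Y + c₁•Z) (r : A) :
    X * (Z * r) = Z * (X * r) + (a₁•(X*r) + b₁•(Y*r) + c₁•(Z*r)) := by
  have h : X*Z = Z*X + (a₁•X + b₁•Y + c₁•Z) := by rw [← hXZ]; noncomm_ring
  have := congrArg (· * r) h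
  simpa [add_mul, smul_mul_assoc, mul_assoc] using this

omit [CharZero F] in
lemma swapYZ {a₂ b₂ c₂ : F} (hYZ : Y*Z - Z*Y = a₂•X + b₂•Y + c₂•Z) (r : A) :
    Y * (Z * r) = Z * (Y * r) + (a₂•(X*r) + b₂•(Y*r) + c₂•(Z*r)) := by
  have h : Y*Z = Z*Y + (a₂•X + b₂•Y + c₂•Z) := by rw [← hYZ]; noncomm_ring
  have := congrArg (· * r) h
  simpa [add_mul, smul_mul_assoc, mul_assoc] using this

lemma lemC {a₂ b₂ c₂ : F} (hZ : Z = X*Y - Y*X)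
    (hYZ : Y*Z - Z*Y = a₂•X + b₂•Y + c₂•Z) :
    ∀ (m p s a b : ℕ), a + b = m → X^p * (Y^a * (Z * (Y^b * X^s))) ∈ Smon F X Y := by
  intro m
  induction m using Nat.strong_induction_on with
  | _ m IH =>
    rcases m with _ | n
    · intro p s a b hab
      obtain ⟨rfl, rfl⟩ : a = 0 ∧ b = 0 := by omega
      have key : X^p * (Y^0 * (Z * (Y^0 * X^s)))
          = X^p * (X * (Y * X^s)) - X^p * (Y * (X * X^s)) := by
        rw [hZ]; simp only [pow_zero, one_mul]; noncomm_ring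
      rw [key]
      refine sub_mem ?_ ?_
      · simpa [pow_succ, pow_one, mul_assoc] using mono_mem (F := F) (X := X) (Y := Y) (p+1) 1 s
      · simpa [pow_succ', pow_one, mul_assoc] using mono_mem (F := F) (X := X) (Y := Y) p 1 (s+1)
    · -- inductive step
      have hE : ∀ a, ∀ b p s : ℕ, a + b ≤ n → X^p * (Y^a * (X * (Y^b * X^s))) ∈ Smon F X Y := by
        intro a
        induction a with
        | zero =>
          intro b p s _
          have key : X^p * (Y^0 * (X * (Y^b * X^s))) = X^(p+1) * (Y^b * X^s) := by
            simp [pow_succ, mul_assoc]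
          rw [key]; exact mono_mem _ _ _
        | succ a iha =>
          intro b p s hle
          have key : X^p * (Y^(a+1) * (X * (Y^b * X^s)))
              = X^p * (Y^a * (X * (Y^(b+1) * X^s))) - X^p * (Y^a * (Z * (Y^b * X^s))) := by
            have e1 : X^p * (Y^(a+1) * (X * (Y^b * X^s)))
                = X^p * (Y^a * (Y * (X * (Y^b * X^s)))) := by
              simp [pow_succ, mul_assoc]
            rw [e1, swapYX hZ]
            have e2 : X^p * (Y^a * (X * (Y^(b+1) * X^s)))
                = X^p * (Y^a * (X * (Y * (Y^b * X^s)))) := by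
              simp [pow_succ', mul_assoc]
            rw [e2]
            simp only [mul_sub, mul_add]
          rw [key]
          exact sub_mem (iha (b+1) p s (by omega)) (IH (a+b) (by omega) p s a b rfl)
      have hcong : ∀ a b p s : ℕ, a + b = n →
          (Submodule.Quotient.mk (X^p * (Y^(a+1) * (Z * (Y^b * X^s)))) : A ⧸ Smon F X Y)
            = Submodule.Quotient.mk (X^p * (Y^a * (Z * (Y^(b+1) * X^s)))) := by
        intro a b p s hab
        rw [Submodule.Quotient.eq]
        have key : X^p * (Y^(a+1) * (Z * (Y^b * X^s))) - X^p * (Y^a * (Z * (Y^(b+1) * X^s)))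
            = a₂ • (X^p * (Y^a * (X * (Y^b * X^s)))) + b₂ • (X^p * (Y^(a+1+b) * X^s))
              + c₂ • (X^p * (Y^a * (Z * (Y^b * X^s)))) := by
          have e1 : X^p * (Y^(a+1) * (Z * (Y^b * X^s)))
              = X^p * (Y^a * (Y * (Z * (Y^b * X^s)))) := by
            simp [pow_succ, mul_assoc]
          rw [e1, swapYZ hYZ]
          have e2 : X^p * (Y^a * (Z * (Y^(b+1) * X^s)))
              = X^p * (Y^a * (Z * (Y * (Y^b * X^s)))) := by
            simp [pow_succ', mul_assoc]
          have e3 : X^p * (Y^(a+1+b) * X^s) = X^p * (Y^a * (Y * (Y^b * X^s))) := by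
            rw [show a+1+b = a+(1+b) by omega]
            simp [pow_add, pow_succ', mul_assoc]
          rw [e2, e3]
          simp only [mul_add, mul_smul_comm]
          abel
        rw [key]
        refine add_mem (add_mem (Submodule.smul_mem _ _ ?_) (Submodule.smul_mem _ _ ?_))
          (Submodule.smul_mem _ _ ?_)
        · exact hE a b p s (by omega)
        · exact mono_mem _ _ _
        · exact IH n (by omega) p s a b hab
      have hchain : ∀ a b p s : ℕ, a + b = n + 1 →
          (Submodule.Quotient.mk (X^p * (Y^a * (Z * (Y^b * X^s)))) : A ⧸ Smon F X Y)
            = Submodule.Quotient.mk (X^p * (Y^0 * (Z * (Y^(n+1) * X^s)))) := by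
        intro a
        induction a with
        | zero =>
          intro b p s hab
          obtain rfl : b = n + 1 := by omega
          rfl
        | succ a iha =>
          intro b p s hab
          rw [hcong a b p s (by omega)]
          exact iha (b+1) p s (by omega)
      intro p s a b hab
      have claim : ∀ t u : ℕ, t + u = n + 2 →
          (Submodule.Quotient.mk (X^p * (Y^t * (X * (Y^u * X^s)))) : A ⧸ Smon F X Y)
            = Submodule.Quotient.mk (X^p * (Y^0 * (X * (Y^(n+2) * X^s))))
              - t • (Submodule.Quotient.mk (X^p * (Y^0 * (Z * (Y^(n+1) * X^s)))) : A ⧸ Smon F X Y) := by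
        intro t
        induction t with
        | zero =>
          intro u hu
          obtain rfl : u = n + 2 := by omega
          simp
        | succ t iht =>
          intro u hu
          have key : X^p * (Y^t * (X * (Y^(u+1) * X^s)))
              = X^p * (Y^(t+1) * (X * (Y^u * X^s))) + X^p * (Y^t * (Z * (Y^u * X^s))) := by
            have e1 : X^p * (Y^t * (X * (Y^(u+1) * X^s)))
                = X^p * (Y^t * (X * (Y * (Y^u * X^s)))) := by
              simp [pow_succ', mul_assoc]
            rw [e1, swapXY hZ]
            have e2 : X^p * (Y^(t+1) * (X * (Y^u * X^s)))
                = X^p * (Y^t * (Y * (X * (Y^u * X^s)))) := by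
              simp [pow_succ, mul_assoc]
            rw [e2]
            simp only [mul_add]
          have h1 : (Submodule.Quotient.mk (X^p * (Y^t * (X * (Y^(u+1) * X^s)))) : A ⧸ Smon F X Y)
              = Submodule.Quotient.mk (X^p * (Y^(t+1) * (X * (Y^u * X^s))))
                + Submodule.Quotient.mk (X^p * (Y^t * (Z * (Y^u * X^s)))) := by
            rw [← Submodule.Quotient.mk_add, ← key]
          have h2 : (Submodule.Quotient.mk (X^p * (Y^t * (Z * (Y^u * X^s)))) : A ⧸ Smon F X Y)
              = Submodule.Quotient.mk (X^p * (Y^0 * (Z * (Y^(n+1) * X^s)))) :=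
            hchain t u p s (by omega)
          have h3 := iht (u+1) (by omega)
          rw [h1, h2] at h3
          have h4 : (Submodule.Quotient.mk (X^p * (Y^(t+1) * (X * (Y^u * X^s)))) : A ⧸ Smon F X Y)
              = Submodule.Quotient.mk (X^p * (Y^0 * (X * (Y^(n+2) * X^s))))
                - t • (Submodule.Quotient.mk (X^p * (Y^0 * (Z * (Y^(n+1) * X^s)))) : A ⧸ Smon F X Y)
                - Submodule.Quotient.mk (X^p * (Y^0 * (Z * (Y^(n+1) * X^s)))) := by
            rw [← h3]; abel
          rw [h4, succ_nsmul]; abel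
      have hfinal := claim (n+2) 0 (by omega)
      have hg1 : (Submodule.Quotient.mk (X^p * (Y^(n+2) * (X * (Y^0 * X^s)))) : A ⧸ Smon F X Y) = 0 := by
        rw [Submodule.Quotient.mk_eq_zero]
        have e : X^p * (Y^(n+2) * (X * (Y^0 * X^s))) = X^p * (Y^(n+2) * X^(s+1)) := by
          simp [pow_succ', mul_assoc]
        rw [e]; exact mono_mem _ _ _
      have hg0 : (Submodule.Quotient.mk (X^p * (Y^0 * (X * (Y^(n+2) * X^s)))) : A ⧸ Smon F X Y) = 0 := by
        rw [Submodule.Quotient.mk_eq_zero]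
        have e : X^p * (Y^0 * (X * (Y^(n+2) * X^s))) = X^(p+1) * (Y^(n+2) * X^s) := by
          simp [pow_succ, mul_assoc]
        rw [e]; exact mono_mem _ _ _
      rw [hg1, hg0] at hfinal
      have hns : ((n+2) • (Submodule.Quotient.mk (X^p * (Y^0 * (Z * (Y^(n+1) * X^s)))) : A ⧸ Smon F X Y)) = 0 := by
        have := hfinal
        rw [zero_sub] at this
        exact neg_eq_zero.mp this.symm
      have hc0 : (Submodule.Quotient.mk (X^p * (Y^0 * (Z * (Y^(n+1) * X^s)))) : A ⧸ Smon F X Y) = 0 := by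
        have h' : ((n+2 : ℕ) : F) • (Submodule.Quotient.mk (X^p * (Y^0 * (Z * (Y^(n+1) * X^s)))) : A ⧸ Smon F X Y) = 0 := by
          rw [Nat.cast_smul_eq_nsmul]; exact hns
        have hne : ((n+2 : ℕ) : F) ≠ 0 := by exact_mod_cast (by omega : (n+2:ℕ) ≠ 0)
        rcases smul_eq_zero.mp h' with h | h
        · exact absurd h hne
        · exact h
      rw [← Submodule.Quotient.mk_eq_zero, hchain a b p s hab]
      exact hc0

lemma lemD {a₁ b₁ c₁ a₂ b₂ c₂ : F} (hZ : Z = X*Y - Y*X)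
    (hXZ : X*Z - Z*X = a₁•X + b₁•Y + c₁•Z)
    (hYZ : Y*Z - Z*Y = a₂•X + b₂•Y + c₂•Z) :
    ∀ i, (∀ a b j : ℕ, X^a * (Y^b * (X^i * (Y * X^j))) ∈ Smon F X Y)
       ∧ (∀ a b j : ℕ, X^a * (Y^b * (X^i * (Z * X^j))) ∈ Smon F X Y) := by
  intro i
  induction i with
  | zero =>
    constructor
    · intro a b j
      have key : X^a * (Y^b * (X^0 * (Y * X^j))) = X^a * (Y^(b+1) * X^j) := by
        simp [pow_succ, mul_assoc]
      rw [key]; exact mono_mem _ _ _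
    · intro a b j
      have key : X^a * (Y^b * (X^0 * (Z * X^j))) = X^a * (Y^b * (Z * (Y^0 * X^j))) := by
        simp [mul_assoc]
      rw [key]; exact lemC hZ hYZ b a j b 0 rfl
  | succ i ih =>
    obtain ⟨ihY, ihZ⟩ := ih
    constructor
    · intro a b j
      have key : X^a * (Y^b * (X^(i+1) * (Y * X^j)))
          = X^a * (Y^b * (X^i * (Y * X^(j+1)))) + X^a * (Y^b * (X^i * (Z * X^j))) := by
        have e1 : X^a * (Y^b * (X^(i+1) * (Y * X^j)))
            = X^a * (Y^b * (X^i * (X * (Y * X^j)))) := by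
          simp [pow_succ, mul_assoc]
        rw [e1, swapXY hZ]
        have e2 : X^a * (Y^b * (X^i * (Y * X^(j+1))))
            = X^a * (Y^b * (X^i * (Y * (X * X^j)))) := by
          simp [pow_succ', mul_assoc]
        rw [e2]
        simp only [mul_add]
      rw [key]
      exact add_mem (ihY a b (j+1)) (ihZ a b j)
    · intro a b j
      have key : X^a * (Y^b * (X^(i+1) * (Z * X^j)))
          = X^a * (Y^b * (X^i * (Z * (X * X^j))))
            + (a₁ • (X^a * (Y^b * (X^i * (X * X^j)))) + b₁ • (X^a * (Y^b * (X^i * (Y * X^j))))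
              + c₁ • (X^a * (Y^b * (X^i * (Z * X^j))))) := by
        have e1 : X^a * (Y^b * (X^(i+1) * (Z * X^j)))
            = X^a * (Y^b * (X^i * (X * (Z * X^j)))) := by
          simp [pow_succ, mul_assoc]
        rw [e1, swapZX hXZ]
        simp only [mul_add, mul_smul_comm]
      rw [key]
      refine add_mem ?_ (add_mem (add_mem (Submodule.smul_mem _ _ ?_) (Submodule.smul_mem _ _ ?_))
        (Submodule.smul_mem _ _ ?_))
      · have e : X^a * (Y^b * (X^i * (Z * (X * X^j)))) = X^a * (Y^b * (X^i * (Z * X^(j+1)))) := by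
          simp [pow_succ', mul_assoc]
        rw [e]; exact ihZ a b (j+1)
      · have e : X^a * (Y^b * (X^i * (X * X^j))) = X^a * (Y^b * X^(i+1+j)) := by
          simp [pow_add, pow_succ, mul_assoc]
        rw [e]; exact mono_mem _ _ _
      · exact ihY a b j
      · exact ihZ a b j

lemma smon_mul_mem {a₁ b₁ c₁ a₂ b₂ c₂ : F} (hZ : Z = X*Y - Y*X)
    (hXZ : X*Z - Z*X = a₁•X + b₁•Y + c₁•Z)
    (hYZ : Y*Z - Z*Y = a₂•X + b₂•Y + c₂•Z)
    (α β γ : F) :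
    ∀ u ∈ Smon F X Y, u * (α•X + β•Y + γ•Z) ∈ Smon F X Y := by
  intro u hu
  induction hu using Submodule.span_induction with
  | mem u hu =>
    obtain ⟨a, b, c, rfl⟩ := hu
    have expand : (X^a * (Y^b * X^c)) * (α•X + β•Y + γ•Z)
        = α • (X^a * (Y^b * (X^c * X))) + β • (X^a * (Y^b * (X^c * (Y * 1))))
          + γ • (X^a * (Y^b * (X^c * (Z * 1)))) := by
      simp only [mul_add, mul_smul_comm, mul_one, mul_assoc]
    rw [expand]
    refine add_mem (add_mem (Submodule.smul_mem _ _ ?_) (Submodule.smul_mem _ _ ?_))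
      (Submodule.smul_mem _ _ ?_)
    · have e : X^a * (Y^b * (X^c * X)) = X^a * (Y^b * X^(c+1)) := by
        simp [pow_succ, mul_assoc]
      rw [e]; exact mono_mem _ _ _
    · have e : X^a * (Y^b * (X^c * (Y * 1))) = X^a * (Y^b * (X^c * (Y * X^0))) := by simp
      rw [e]; exact (lemD hZ hXZ hYZ c).1 a b 0
    · have e : X^a * (Y^b * (X^c * (Z * 1))) = X^a * (Y^b * (X^c * (Z * X^0))) := by simp
      rw [e]; exact (lemD hZ hXZ hYZ c).2 a b 0
  | zero => simpa using (Smon F X Y).zero_mem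
  | add u v _ _ hu hv => rw [add_mul]; exact add_mem hu hv
  | smul r u _ hu => rw [smul_mul_assoc]; exact Submodule.smul_mem _ _ hu

end Machinery


section UEA
attribute [local instance] LieRing.ofAssociativeRing
variable {F : Type*} [Field F] {L : Type*} [LieRing L] [LieAlgebra F L]

lemma uea_comm (w v : L) :
    ι F w * ι F v = ι F v * ι F w + ι F ⁅w, v⁆ := by
  have h : ι F (L := L) ⁅w, v⁆ = ⁅ι F w, ι F v⁆ := (ι F).map_lie w v
  rw [Ring.lie_def] at h
  rw [h]; noncomm_ring

lemma uea_Z (x y : L) : ι F ⁅x, y⁆ = ι F x * ι F y - ι F y * ι F x := by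
  have h : ι F (L := L) ⁅x, y⁆ = ⁅ι F x, ι F y⁆ := (ι F).map_lie x y
  rw [Ring.lie_def] at h
  exact h

lemma uea_adjoin_range_eq_top :
    Algebra.adjoin F (Set.range (ι F : L →ₗ⁅F⁆ UniversalEnvelopingAlgebra F L)) = ⊤ := by
  set A' := Algebra.adjoin F (Set.range (ι F : L →ₗ⁅F⁆ UniversalEnvelopingAlgebra F L)) with hA'
  let f : L →ₗ⁅F⁆ A' :=
    { toFun := fun w => ⟨ι F w, Algebra.subset_adjoin ⟨w, rfl⟩⟩
      map_add' := by intro a b; ext; simp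
      map_smul' := by intro r a; ext; simp
      map_lie' := by
        intro a b
        ext
        show (ι F ⁅a, b⁆ : UniversalEnvelopingAlgebra F L) = _
        rw [(ι F).map_lie a b]
        simp [Ring.lie_def] }
  have key : A'.val.comp (UniversalEnvelopingAlgebra.lift F f) = AlgHom.id F _ := by
    ext w
    show A'.val ((UniversalEnvelopingAlgebra.lift F f) (ι F w)) = ι F w
    rw [UniversalEnvelopingAlgebra.lift_ι_apply]
    rfl
  rw [eq_top_iff]
  intro u _
  have : A'.val ((UniversalEnvelopingAlgebra.lift F f) u) = u := by
    have := AlgHom.congr_fun key u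
    simpa using this
  rw [← this]
  exact ((UniversalEnvelopingAlgebra.lift F f) u).2

variable [CharZero F]

/-- Main spanning lemma: if `x, y, ⁅x,y⁆` span `L`, then the monomials
`X^a Y^b X^c` span the enveloping algebra. -/
lemma smon_eq_top (x y : L)
    (hspan : Submodule.span F ({x, y, ⁅x, y⁆} : Set L) = ⊤) :
    Smon F (ι F x : UniversalEnvelopingAlgebra F L) (ι F y) = ⊤ := by
  set X : UniversalEnvelopingAlgebra F L := ι F x with hX
  set Y : UniversalEnvelopingAlgebra F L := ι F y with hY
  set Z : UniversalEnvelopingAlgebra F L := ι F ⁅x, y⁆ with hZdef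
  have hZ : Z = X * Y - Y * X := uea_Z x y
  -- structure constants
  have hxz : ⁅x, ⁅x, y⁆⁆ ∈ Submodule.span F ({x, y, ⁅x, y⁆} : Set L) := by rw [hspan]; trivial
  have hyz : ⁅y, ⁅x, y⁆⁆ ∈ Submodule.span F ({x, y, ⁅x, y⁆} : Set L) := by rw [hspan]; trivial
  have hdecomp : ∀ w : L, w ∈ Submodule.span F ({x, y, ⁅x, y⁆} : Set L) →
      ∃ α β γ : F, w = α • x + β • y + γ • ⁅x, y⁆ := by
    intro w hw
    rw [show ({x, y, ⁅x, y⁆} : Set L) = insert x (insert y {⁅x, y⁆}) from rfl] at hw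
    rw [Submodule.mem_span_insert] at hw
    obtain ⟨α, w', hw', rfl⟩ := hw
    rw [Submodule.mem_span_insert] at hw'
    obtain ⟨β, w'', hw'', rfl⟩ := hw'
    rw [Submodule.mem_span_singleton] at hw''
    obtain ⟨γ, rfl⟩ := hw''
    exact ⟨α, β, γ, by abel⟩
  obtain ⟨a₁, b₁, c₁, h1⟩ := hdecomp _ hxz
  obtain ⟨a₂, b₂, c₂, h2⟩ := hdecomp _ hyz
  have hXZ : X*Z - Z*X = a₁•X + b₁•Y + c₁•Z := by
    have h := uea_comm (F := F) ⁅x, y⁆ x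
    have : X*Z - Z*X = ι F ⁅x, ⁅x, y⁆⁆ := by
      rw [hX, hZdef]
      have h' := uea_comm (F := F) x ⁅x, y⁆
      rw [h']; abel
    rw [this, h1]
    simp [hX, hY, hZdef]
    exact congrArg (fun t => c₁ • t) ((ι F).map_lie x y)
  have hYZ : Y*Z - Z*Y = a₂•X + b₂•Y + c₂•Z := by
    have : Y*Z - Z*Y = ι F ⁅y, ⁅x, y⁆⁆ := by
      rw [hY, hZdef]
      have h' := uea_comm (F := F) y ⁅x, y⁆
      rw [h']; abel
    rw [this, h2]
    simp [hX, hY, hZdef]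
    exact congrArg (fun t => c₂ • t) ((ι F).map_lie x y)
  -- closure of Smon under right multiplication by elements of adjoin(range ι)
  have hmul : ∀ u : UniversalEnvelopingAlgebra F L, ∀ v ∈ Smon F X Y, v * u ∈ Smon F X Y := by
    intro u
    have hu : u ∈ Algebra.adjoin F (Set.range (ι F : L →ₗ⁅F⁆ UniversalEnvelopingAlgebra F L)) := by
      rw [uea_adjoin_range_eq_top]; trivial
    induction hu using Algebra.adjoin_induction with
    | mem w hw =>
      obtain ⟨w, rfl⟩ := hw
      intro v hv
      obtain ⟨α, β, γ, hw⟩ := hdecomp w (by rw [hspan]; trivial)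
      have : (ι F w : UniversalEnvelopingAlgebra F L) = α•X + β•Y + γ•Z := by
        rw [hw]; simp [hX, hY, hZdef]
        exact congrArg (fun t => γ • t) ((ι F).map_lie x y)
      rw [this]
      exact smon_mul_mem hZ hXZ hYZ α β γ v hv
    | algebraMap r =>
      intro v hv
      rw [← Algebra.commutes r v, ← Algebra.smul_def]
      exact Submodule.smul_mem _ _ hv
    | add u₁ u₂ _ _ h₁ h₂ =>
      intro v hv
      rw [mul_add]
      exact add_mem (h₁ v hv) (h₂ v hv)
    | mul u₁ u₂ _ _ h₁ h₂ =>
      intro v hv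
      rw [← mul_assoc]
      exact h₂ _ (h₁ v hv)
  rw [eq_top_iff]
  intro u _
  have h1 : (1 : UniversalEnvelopingAlgebra F L) ∈ Smon F X Y := by
    simpa using mono_mem (F := F) (X := X) (Y := Y) 0 0 0
  simpa using hmul u 1 h1

end UEA

section Forward
attribute [local instance] LieRing.ofAssociativeRing
variable {F : Type*} [Field F] {L : Type*} [LieRing L] [LieAlgebra F L] [Module.Finite F L]

lemma forward_case_b (hdim : finrank F L = 3)
    (P M K : LieSubalgebra F L)
    (hPK : P.toSubmodule ≤ K.toSubmodule) (hMK : M.toSubmodule ≤ K.toSubmodule)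
    (hK2 : finrank F K.toSubmodule = 2)
    (z : L) (hzK : z ∉ K.toSubmodule)
    (g : L →ₗ[F] F) (π : L →ₗ[F] L)
    (hπmem : ∀ a, π a ∈ K.toSubmodule)
    (hπK : ∀ k ∈ K.toSubmodule, π k = k)
    (hgK : ∀ k ∈ K.toSubmodule, g k = 0)
    (hgz : g z = 1)
    (hdec : ∀ a, π a + g a • z = a)
    (s : F)
    (hs : ∀ k ∈ K.toSubmodule, g ⁅π ⁅k, z⁆, z⁆ = -(s * g ⁅k, z⁆))
    (hsp : Submodule.span F
      {u : UniversalEnvelopingAlgebra F L |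
        ∃ p ∈ Algebra.adjoin F (ι F '' (P : Set L)),
          ∃ m ∈ Algebra.adjoin F (ι F '' (M : Set L)),
            ∃ q ∈ Algebra.adjoin F (ι F '' (P : Set L)), u = p * m * q} = ⊤) :
    False := by
  classical
  -- bracket with z as a linear map
  let brz : L →ₗ[F] L :=
    { toFun := fun a => ⁅a, z⁆
      map_add' := fun a b => add_lie a b z
      map_smul' := fun r a => smul_lie r a z }
  have hbrz : ∀ a, brz a = ⁅a, z⁆ := fun a => rfl
  -- Jacobi vanishing
  have hJac : ∀ k ∈ K.toSubmodule, ∀ k' ∈ K.toSubmodule, g ⁅(⁅k, k'⁆ : L), z⁆ = 0 := by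
    intro k hk k' hk'
    have hKlie : ∀ u ∈ K.toSubmodule, ∀ v ∈ K.toSubmodule, ⁅u, v⁆ ∈ K.toSubmodule := by
      intro u hu v hv
      exact K.lie_mem hu hv
    have h1 : ⁅(⁅k, k'⁆ : L), z⁆ = ⁅k, ⁅k', z⁆⁆ - ⁅k', ⁅k, z⁆⁆ := lie_lie k k' z
    have h2 : ⁅k', z⁆ = π ⁅k', z⁆ + g ⁅k', z⁆ • z := (hdec _).symm
    have h3 : ⁅k, z⁆ = π ⁅k, z⁆ + g ⁅k, z⁆ • z := (hdec _).symm
    have e1 : g ⁅k, ⁅k', z⁆⁆ = g ⁅k', z⁆ * g ⁅k, z⁆ := by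
      conv_lhs => rw [h2]
      rw [lie_add, lie_smul, map_add, map_smul]
      rw [hgK _ (hKlie _ hk _ (hπmem _))]
      simp [smul_eq_mul]
    have e2 : g ⁅k', ⁅k, z⁆⁆ = g ⁅k, z⁆ * g ⁅k', z⁆ := by
      conv_lhs => rw [h3]
      rw [lie_add, lie_smul, map_add, map_smul]
      rw [hgK _ (hKlie _ hk' _ (hπmem _))]
      simp [smul_eq_mul]
    rw [h1, map_sub, e1, e2]
    ring
  -- the 2x2 matrices
  let E10 : Matrix (Fin 2) (Fin 2) F := Matrix.single 1 0 1
  let E11 : Matrix (Fin 2) (Fin 2) F := Matrix.single 1 1 1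
  have hE1110 : E11 * E10 = E10 := by
    ext a b
    fin_cases a <;> fin_cases b <;>
      simp [E10, E11, Matrix.mul_apply, Fin.sum_univ_two, Matrix.single]
  have hE1011 : E10 * E11 = 0 := by
    ext a b
    fin_cases a <;> fin_cases b <;>
      simp [E10, E11, Matrix.mul_apply, Fin.sum_univ_two, Matrix.single]
  have hE1010 : E10 * E10 = 0 := by
    ext a b
    fin_cases a <;> fin_cases b <;>
      simp [E10, E11, Matrix.mul_apply, Fin.sum_univ_two, Matrix.single]
  have hE1111 : E11 * E11 = E11 := by
    ext a b
    fin_cases a <;> fin_cases b <;>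
      simp [E10, E11, Matrix.mul_apply, Fin.sum_univ_two, Matrix.single]
  -- the linear map to matrices
  let θ : L →ₗ[F] F := (g.comp (brz.comp π)) + s • g
  have hθ : ∀ a, θ a = g ⁅π a, z⁆ + s * g a := fun a => rfl
  let ρ : L →ₗ[F] Matrix (Fin 2) (Fin 2) F :=
    { toFun := fun a => g a • E10 + θ a • E11
      map_add' := by
        intro a b
        simp only [map_add, add_smul]
        abel
      map_smul' := by
        intro r a
        simp only [map_smul, smul_eq_mul, RingHom.id_apply, smul_add, smul_smul] }
  have hρ : ∀ a, ρ a = g a • E10 + θ a • E11 := fun a => rfl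
  -- scalar identities
  have hbr : ∀ a b : L, ⁅a, b⁆ = ⁅π a, π b⁆ + g b • ⁅π a, z⁆ - g a • ⁅π b, z⁆ := by
    intro a b
    have hzswap : ∀ u : L, ⁅z, u⁆ = -⁅u, z⁆ := fun u => by rw [← lie_skew]
    conv_lhs => rw [← hdec a, ← hdec b]
    simp only [add_lie, lie_add, smul_lie, lie_smul, lie_self, smul_zero, smul_smul,
      add_zero, zero_add, hzswap, smul_neg]
    abel
  have hS1 : ∀ a b : L, g ⁅a, b⁆ = θ a * g b - θ b * g a := by
    intro a b
    rw [hbr a b, map_sub, map_add, map_smul, map_smul]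
    rw [hgK _ (K.lie_mem (hπmem a) (hπmem b))]
    rw [hθ, hθ]
    simp only [smul_eq_mul]
    ring
  have hS2 : ∀ a b : L, θ ⁅a, b⁆ = 0 := by
    intro a b
    rw [hθ]
    have hπab : π ⁅a, b⁆ = ⁅π a, π b⁆ + g b • π ⁅π a, z⁆ - g a • π ⁅π b, z⁆ := by
      conv_lhs => rw [hbr a b]
      rw [map_sub, map_add, map_smul, map_smul, hπK _ (K.lie_mem (hπmem a) (hπmem b))]
    rw [hπab]
    rw [sub_lie, add_lie, smul_lie, smul_lie, map_sub, map_add, map_smul, map_smul]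
    rw [hJac _ (hπmem a) _ (hπmem b)]
    rw [hs _ (hπmem a), hs _ (hπmem b)]
    rw [hS1 a b, hθ, hθ]
    simp only [smul_eq_mul]
    ring
  -- Lie algebra morphism
  let ρL : L →ₗ⁅F⁆ Matrix (Fin 2) (Fin 2) F :=
    { ρ with
      map_lie' := by
        intro a b
        show ρ ⁅a, b⁆ = ⁅ρ a, ρ b⁆
        rw [Ring.lie_def, hρ, hρ, hρ, hS1 a b, hS2 a b]
        simp only [add_mul, mul_add, smul_mul_assoc, Matrix.mul_smul, hE1010, hE1011, hE1110,
          hE1111, smul_smul, smul_zero]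
        rw [zero_smul, zero_add]
        simp only [zero_add, add_zero]
        rw [sub_smul]
        rw [mul_comm (θ b) (θ a)]
        abel }
  -- lift to the enveloping algebra
  let Uhom : UniversalEnvelopingAlgebra F L →ₐ[F] Matrix (Fin 2) (Fin 2) F :=
    UniversalEnvelopingAlgebra.lift F ρL
  -- upper triangular subalgebra
  let Dsub : Subalgebra F (Matrix (Fin 2) (Fin 2) F) :=
    { carrier := {A | A 1 0 = 0}
      mul_mem' := by
        rintro A B (hA : A 1 0 = 0) (hB : B 1 0 = 0)
        show (A * B) 1 0 = 0
        rw [Matrix.mul_apply, Fin.sum_univ_two, hA, hB]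
        simp
      one_mem' := by
        show (1 : Matrix (Fin 2) (Fin 2) F) 1 0 = 0
        simp [Matrix.one_apply]
      add_mem' := by
        rintro A B (hA : A 1 0 = 0) (hB : B 1 0 = 0)
        show (A + B) 1 0 = 0
        simp [hA, hB]
      zero_mem' := by simp
      algebraMap_mem' := by
        intro r
        show (algebraMap F (Matrix (Fin 2) (Fin 2) F) r) 1 0 = 0
        rw [Algebra.algebraMap_eq_smul_one]
        simp [Matrix.one_apply] }
  have hρK : ∀ k ∈ K.toSubmodule, ρ k ∈ Dsub := by
    intro k hk
    show (g k • E10 + θ k • E11) 1 0 = 0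
    rw [hgK k hk]
    simp only [zero_smul, zero_add, Matrix.smul_apply]
    have : E11 1 0 = 0 := by simp [E11, Matrix.single]
    rw [this, smul_zero]
  have himg : ∀ (N : LieSubalgebra F L), N.toSubmodule ≤ K.toSubmodule →
      ∀ u ∈ Algebra.adjoin F (ι F '' (N : Set L)), Uhom u ∈ Dsub := by
    intro N hNK u hu
    have h1 : Uhom u ∈ (Algebra.adjoin F (ι F '' (N : Set L))).map Uhom :=
      Subalgebra.mem_map.mpr ⟨u, hu, rfl⟩
    rw [AlgHom.map_adjoin] at h1
    have h2 : Algebra.adjoin F (Uhom '' (ι F '' (N : Set L))) ≤ Dsub := by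
      apply Algebra.adjoin_le
      rintro v ⟨w, ⟨k, hkN, rfl⟩, rfl⟩
      have : Uhom (ι F k) = ρ k := UniversalEnvelopingAlgebra.lift_ι_apply F ρL k
      rw [this]
      exact hρK k (hNK hkN)
    exact h2 h1
  -- conclude the contradiction
  have hall : ∀ u ∈ Submodule.span F
      {u : UniversalEnvelopingAlgebra F L |
        ∃ p ∈ Algebra.adjoin F (ι F '' (P : Set L)),
          ∃ m ∈ Algebra.adjoin F (ι F '' (M : Set L)),
            ∃ q ∈ Algebra.adjoin F (ι F '' (P : Set L)), u = p * m * q},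
      Uhom u ∈ Dsub := by
    intro u hu
    induction hu using Submodule.span_induction with
    | mem u hu =>
      obtain ⟨p, hp, m, hm, q, hq, rfl⟩ := hu
      rw [map_mul, map_mul]
      exact mul_mem (mul_mem (himg P hPK p hp) (himg M hMK m hm)) (himg P hPK q hq)
    | zero => simp only [map_zero]; exact zero_mem _
    | add u v _ _ hu hv => rw [map_add]; exact add_mem hu hv
    | smul r u _ hu => rw [map_smul]; exact Subalgebra.smul_mem _ hu r
  have hz : Uhom (ι F z) ∈ Dsub := by
    apply hall
    rw [hsp]
    trivial
  have : Uhom (ι F z) 1 0 = 0 := hz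
  rw [UniversalEnvelopingAlgebra.lift_ι_apply] at this
  have hcontra : (ρ z) 1 0 = 1 := by
    show (g z • E10 + θ z • E11) 1 0 = 1
    have h10 : E10 1 0 = 1 := by simp [E10, Matrix.single]
    have h11 : E11 1 0 = 0 := by simp [E11, Matrix.single]
    simp only [Matrix.add_apply, Matrix.smul_apply, h10, h11, smul_zero, add_zero, hgz, one_smul]
  rw [show ρL z = ρ z from rfl] at this
  rw [hcontra] at this
  exact one_ne_zero this
end Forward

section ForwardMain
variable {F : Type*} [Field F] {L : Type*} [LieRing L] [LieAlgebra F L] [Module.Finite F L]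

lemma forward_main (hdim : finrank F L = 3) (P M : LieSubalgebra F L)
    (hne : P.toSubmodule ⊔ M.toSubmodule ≠ ⊤)
    (hsp : Submodule.span F
      {u : UniversalEnvelopingAlgebra F L |
        ∃ p ∈ Algebra.adjoin F (ι F '' (P : Set L)),
          ∃ m ∈ Algebra.adjoin F (ι F '' (M : Set L)),
            ∃ q ∈ Algebra.adjoin F (ι F '' (P : Set L)), u = p * m * q} = ⊤) :
    ∃ x y : L, LieSubalgebra.lieSpan F L {x, y} = ⊤ := by
  classical
  have hWfr : finrank F ↥(P.toSubmodule ⊔ M.toSubmodule) ≤ 2 := by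
    have h := Submodule.finrank_lt (K := F) (V := L) hne
    rw [hdim] at h
    omega
  obtain ⟨v₀, w₀, hvw⟩ := helperA _ hWfr
  obtain ⟨x₁, y₁, hind, hle⟩ := helperB (le_of_eq hdim.symm) v₀ w₀
  set K := LieSubalgebra.lieSpan F L {x₁, y₁} with hKdef
  by_cases hKtop : K = ⊤
  · exact ⟨x₁, y₁, hKtop⟩
  have hsubK : span F ({x₁, y₁} : Set L) ≤ K.toSubmodule := by
    rw [Submodule.span_le]
    intro u hu
    exact LieSubalgebra.subset_lieSpan hu
  have hPMK : P.toSubmodule ⊔ M.toSubmodule ≤ K.toSubmodule :=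
    le_trans hvw (le_trans hle hsubK)
  have hPK : P.toSubmodule ≤ K.toSubmodule := le_trans le_sup_left hPMK
  have hMK : M.toSubmodule ≤ K.toSubmodule := le_trans le_sup_right hPMK
  have hKne : K.toSubmodule ≠ ⊤ := by
    intro h
    apply hKtop
    rw [← LieSubalgebra.toSubmodule_inj K ⊤, LieSubalgebra.top_toSubmodule]
    exact h
  have hK2 : finrank F K.toSubmodule = 2 := by
    have hlt := Submodule.finrank_lt (K := F) (V := L) hKne
    rw [hdim] at hlt
    have hge : 2 ≤ finrank F K.toSubmodule := by
      have := Submodule.finrank_mono hsubK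
      rw [fr_pair hind] at this
      omega
    omega
  obtain ⟨z, hzK⟩ := exists_notMem_of_ne_top _ hKne
  have hz0 : z ≠ 0 := fun h => hzK (h ▸ (K.toSubmodule).zero_mem)
  -- complement structure
  have hdisj : Disjoint K.toSubmodule (span F ({z} : Set L)) := by
    rw [Submodule.disjoint_def]
    intro u huK huz
    rw [Submodule.mem_span_singleton] at huz
    obtain ⟨c, rfl⟩ := huz
    by_cases hc : c = 0
    · rw [hc, zero_smul]
    · exfalso
      apply hzK
      have := Submodule.smul_mem K.toSubmodule c⁻¹ huK
      rwa [smul_smul, inv_mul_cancel₀ hc, one_smul] at this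
  have hsup : K.toSubmodule ⊔ span F ({z} : Set L) = ⊤ := by
    apply Submodule.eq_top_of_finrank_eq
    have h1 := Submodule.finrank_sup_add_finrank_inf_eq K.toSubmodule (span F ({z} : Set L))
    rw [hdisj.eq_bot] at h1
    rw [finrank_span_singleton hz0, hK2] at h1
    simp only [finrank_bot] at h1
    rw [hdim]
    omega
  have hcompl : IsCompl K.toSubmodule (span F ({z} : Set L)) :=
    ⟨hdisj, codisjoint_iff.mpr hsup⟩
  -- projections
  let π : L →ₗ[F] L :=
    (K.toSubmodule).subtype.comp ((K.toSubmodule).linearProjOfIsCompl _ hcompl)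
  let e := LinearEquiv.toSpanNonzeroSingleton F L z hz0
  let g : L →ₗ[F] F :=
    (e.symm : (span F ({z} : Set L)) →ₗ[F] F).comp
      ((span F ({z} : Set L)).linearProjOfIsCompl _ hcompl.symm)
  have hπmem : ∀ a, π a ∈ K.toSubmodule := fun a =>
    ((K.toSubmodule).linearProjOfIsCompl _ hcompl a).2
  have hπK : ∀ k ∈ K.toSubmodule, π k = k := by
    intro k hk
    show ((K.toSubmodule).projectionOnto _ hcompl k : L) = k
    rw [Submodule.projectionOnto_apply_left hcompl ⟨k, hk⟩]
  have hdec : ∀ a, π a + g a • z = a := by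
    intro a
    have h := Submodule.projection_add_projection_eq_self hcompl a
    have h2 : g a • z = ((span F ({z} : Set L)).linearProjOfIsCompl _ hcompl.symm a : L) := by
      have h3 := e.apply_symm_apply ((span F ({z} : Set L)).linearProjOfIsCompl _ hcompl.symm a)
      have h4 : (e (g a) : L) = g a • z := by
        simp [e, LinearEquiv.toSpanNonzeroSingleton]
      rw [← h4]
      exact congrArg Subtype.val h3
    rw [h2]
    exact h
  have hgK : ∀ k ∈ K.toSubmodule, g k = 0 := by
    intro k hk
    have h := hdec k
    rw [hπK k hk] at h
    have : g k • z = 0 := by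
      have := congrArg (fun u => u - k) h
      simpa using this
    rcases smul_eq_zero.mp this with h' | h'
    · exact h'
    · exact absurd h' hz0
  have hgz : g z = 1 := by
    have h := hdec z
    have hπz : π z = 0 := by
      show ((K.toSubmodule).projectionOnto _ hcompl z : L) = 0
      rw [Submodule.projectionOnto_apply_of_mem_right hcompl
        (Submodule.mem_span_singleton_self z)]
      rfl
    rw [hπz, zero_add] at h
    have : (g z - 1) • z = 0 := by
      rw [sub_smul, one_smul, h]
      simp
    rcases smul_eq_zero.mp this with h' | h'
    · exact sub_eq_zero.mp h'
    · exact absurd h' hz0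
  by_cases hA : ∃ k ∈ K.toSubmodule, g ⁅k, z⁆ = 0 ∧ g ⁅π ⁅k, z⁆, z⁆ ≠ 0
  · -- Case A: produce generators
    obtain ⟨k₀, hk₀K, hφ0, hψφ⟩ := hA
    have hbrw : ⁅k₀, z⁆ = π ⁅k₀, z⁆ := by
      have h := hdec ⁅k₀, z⁆
      rw [hφ0, zero_smul, add_zero] at h
      exact h.symm
    have hwK : π ⁅k₀, z⁆ ∈ K.toSubmodule := hπmem _
    have hw0 : π ⁅k₀, z⁆ ≠ 0 := by
      intro h
      apply hψφ
      rw [h]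
      simp
    have hk₀0 : k₀ ≠ 0 := by
      intro h
      apply hw0
      rw [h]
      simp
    have hindep2 : LinearIndependent F ![k₀, π ⁅k₀, z⁆] := by
      rw [LinearIndependent.pair_iff' hk₀0]
      intro a ha
      apply hψφ
      rw [← ha, smul_lie, map_smul, smul_eq_mul, hφ0, mul_zero]
    have hspan2 : span F ({k₀, π ⁅k₀, z⁆} : Set L) = K.toSubmodule := by
      apply Submodule.eq_of_le_of_finrank_le
      · rw [Submodule.span_le]
        rintro u (rfl | rfl)
        · exact hk₀K
        · exact hwK
      · rw [fr_pair hindep2, hK2]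
    refine ⟨k₀, z, ?_⟩
    have htopsub : (LieSubalgebra.lieSpan F L {k₀, z}).toSubmodule = ⊤ := by
      rw [← top_le_iff, ← hsup]
      apply sup_le
      · rw [← hspan2, Submodule.span_le]
        rintro u (rfl | rfl)
        · exact LieSubalgebra.subset_lieSpan (by simp)
        · rw [← hbrw]
          exact LieSubalgebra.lie_mem _ (LieSubalgebra.subset_lieSpan (by simp))
            (LieSubalgebra.subset_lieSpan (by simp))
      · rw [Submodule.span_le]
        rintro u rfl
        exact LieSubalgebra.subset_lieSpan (by simp)
    rw [← LieSubalgebra.toSubmodule_inj, LieSubalgebra.top_toSubmodule]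
    exact htopsub
  · -- Case B: contradiction with the spanning hypothesis
    push_neg at hA
    have hs : ∃ s : F, ∀ k ∈ K.toSubmodule, g ⁅π ⁅k, z⁆, z⁆ = -(s * g ⁅k, z⁆) := by
      by_cases hphi : ∀ k ∈ K.toSubmodule, g ⁅k, z⁆ = 0
      · refine ⟨0, fun k hk => ?_⟩
        rw [hA k hk (hphi k hk)]
        ring
      · push_neg at hphi
        obtain ⟨k₁, hk₁, hφ1⟩ := hphi
        refine ⟨-(g ⁅π ⁅k₁, z⁆, z⁆) / g ⁅k₁, z⁆, fun k hk => ?_⟩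
        have hk' : k - (g ⁅k, z⁆ / g ⁅k₁, z⁆) • k₁ ∈ K.toSubmodule :=
          sub_mem hk (Submodule.smul_mem _ _ hk₁)
        have hφk' : g ⁅k - (g ⁅k, z⁆ / g ⁅k₁, z⁆) • k₁, z⁆ = 0 := by
          rw [sub_lie, smul_lie, map_sub, map_smul, smul_eq_mul]
          field_simp
          ring
        have h0 := hA _ hk' hφk'
        have hexp : g ⁅π ⁅k - (g ⁅k, z⁆ / g ⁅k₁, z⁆) • k₁, z⁆, z⁆
            = g ⁅π ⁅k, z⁆, z⁆ - (g ⁅k, z⁆ / g ⁅k₁, z⁆) * g ⁅π ⁅k₁, z⁆, z⁆ := by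
          rw [sub_lie, smul_lie, map_sub, map_smul, sub_lie, smul_lie, map_sub, map_smul,
            smul_eq_mul]
        rw [hexp] at h0
        have h1 : g ⁅π ⁅k, z⁆, z⁆ = (g ⁅k, z⁆ / g ⁅k₁, z⁆) * g ⁅π ⁅k₁, z⁆, z⁆ :=
          sub_eq_zero.mp h0
        rw [h1]
        field_simp
    obtain ⟨s, hs'⟩ := hs
    exact (forward_case_b hdim P M K hPK hMK hK2 z hzK g π hπmem hπK hgK hgz hdec s hs' hsp).elim
end ForwardMain

section Backward
variable {F : Type*} [Field F] [CharZero F] {L : Type*} [LieRing L] [LieAlgebra F L]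
  [Module.Finite F L]

lemma backward_main (hdim : finrank F L = 3) (x y : L)
    (hgen : LieSubalgebra.lieSpan F L {x, y} = ⊤) :
    ∃ P M : LieSubalgebra F L,
      (P.toSubmodule ⊔ M.toSubmodule ≠ ⊤) ∧
      Submodule.span F
        {u : UniversalEnvelopingAlgebra F L |
          ∃ p ∈ Algebra.adjoin F (ι F '' (P : Set L)),
            ∃ m ∈ Algebra.adjoin F (ι F '' (M : Set L)),
              ∃ q ∈ Algebra.adjoin F (ι F '' (P : Set L)), u = p * m * q} = ⊤ := by
  classical
  have hz : ⁅x, y⁆ ∉ span F ({x, y} : Set L) := by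
    intro hzin
    have hlie : ∀ {u v : L}, u ∈ span F ({x, y} : Set L) → v ∈ span F ({x, y} : Set L) →
        ⁅u, v⁆ ∈ span F ({x, y} : Set L) := by
      intro u v hu hv
      obtain ⟨a, b, rfl⟩ := Submodule.mem_span_pair.mp hu
      obtain ⟨c, d, rfl⟩ := Submodule.mem_span_pair.mp hv
      have hid : ⁅a•x + b•y, c•x + d•y⁆ = (a*d) • ⁅x,y⁆ - (b*c) • ⁅x,y⁆ := by
        have hyx : ⁅y, x⁆ = -⁅x, y⁆ := by rw [← lie_skew]
        simp only [lie_add, add_lie, lie_smul, smul_lie, lie_self, smul_zero, zero_add,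
          add_zero, hyx, smul_neg, smul_smul]
        module
      rw [hid]
      exact sub_mem (Submodule.smul_mem _ _ hzin) (Submodule.smul_mem _ _ hzin)
    let S₂ : LieSubalgebra F L :=
      { span F ({x, y} : Set L) with lie_mem' := fun hu hv => hlie hu hv }
    have hle : LieSubalgebra.lieSpan F L {x, y} ≤ S₂ := by
      rw [LieSubalgebra.lieSpan_le]
      intro u hu
      exact Submodule.subset_span hu
    rw [hgen] at hle
    have hsp2 : span F ({x, y} : Set L) = ⊤ := by
      rw [Submodule.eq_top_iff']
      intro u
      exact hle (LieSubalgebra.mem_top u)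
    have h1 := finrank_span_pair_le (F := F) x y
    rw [hsp2, finrank_top, hdim] at h1
    omega
  have hz0 : ⁅x, y⁆ ≠ 0 := fun h => hz (h ▸ zero_mem _)
  have hx0 : x ≠ 0 := by
    rintro rfl
    exact hz0 (zero_lie y)
  have hindep : LinearIndependent F ![x, y] := by
    rw [LinearIndependent.pair_iff' hx0]
    intro a ha
    apply hz
    have h0 : ⁅x, y⁆ = 0 := by rw [← ha]; simp
    rw [h0]
    exact zero_mem _
  have hdisj : Disjoint (span F ({x, y} : Set L)) (span F ({⁅x, y⁆} : Set L)) := by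
    rw [Submodule.disjoint_def]
    intro u hu huz
    rw [Submodule.mem_span_singleton] at huz
    obtain ⟨c, rfl⟩ := huz
    by_cases hc : c = 0
    · rw [hc, zero_smul]
    · exfalso
      apply hz
      have := Submodule.smul_mem (span F ({x, y} : Set L)) c⁻¹ hu
      rwa [smul_smul, inv_mul_cancel₀ hc, one_smul] at this
  have hxyz : span F ({x, y, ⁅x, y⁆} : Set L) = ⊤ := by
    have hun : ({x, y, ⁅x, y⁆} : Set L) = {x, y} ∪ {⁅x, y⁆} := by
      ext u; simp; tauto
    rw [hun, Submodule.span_union]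
    apply Submodule.eq_top_of_finrank_eq
    have h1 := Submodule.finrank_sup_add_finrank_inf_eq
      (span F ({x, y} : Set L)) (span F ({⁅x, y⁆} : Set L))
    rw [hdisj.eq_bot] at h1
    rw [fr_pair hindep, finrank_span_singleton hz0] at h1
    simp only [finrank_bot] at h1
    rw [hdim]
    omega
  have hSm := smon_eq_top (F := F) x y hxyz
  let P : LieSubalgebra F L :=
    { span F ({x} : Set L) with
      lie_mem' := by
        intro u v hu hv
        obtain ⟨a, rfl⟩ := Submodule.mem_span_singleton.mp hu
        obtain ⟨b, rfl⟩ := Submodule.mem_span_singleton.mp hv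
        have h0 : ⁅a • x, b • x⁆ = 0 := by simp
        rw [h0]
        show (0 : L) ∈ span F ({x} : Set L)
        exact zero_mem _ }
  let M : LieSubalgebra F L :=
    { span F ({y} : Set L) with
      lie_mem' := by
        intro u v hu hv
        obtain ⟨a, rfl⟩ := Submodule.mem_span_singleton.mp hu
        obtain ⟨b, rfl⟩ := Submodule.mem_span_singleton.mp hv
        have h0 : ⁅a • y, b • y⁆ = 0 := by simp
        rw [h0]
        show (0 : L) ∈ span F ({y} : Set L)
        exact zero_mem _ }
  refine ⟨P, M, ?_, ?_⟩
  · intro htop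
    have hPM : P.toSubmodule ⊔ M.toSubmodule = span F ({x, y} : Set L) := by
      show span F ({x} : Set L) ⊔ span F ({y} : Set L) = _
      rw [← Submodule.span_union, Set.singleton_union]
    rw [hPM] at htop
    have h1 := finrank_span_pair_le (F := F) x y
    rw [htop, finrank_top, hdim] at h1
    omega
  · apply le_antisymm le_top
    rw [← hSm]
    refine Submodule.span_le.mpr ?_
    rintro u ⟨a, b, c, rfl⟩
    apply Submodule.subset_span
    have hxP : x ∈ (P : Set L) := Submodule.mem_span_singleton_self x
    have hyM : y ∈ (M : Set L) := Submodule.mem_span_singleton_self y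
    have hXadj : (ι F x : UniversalEnvelopingAlgebra F L) ∈
        Algebra.adjoin F (ι F '' (P : Set L)) :=
      Algebra.subset_adjoin (Set.mem_image_of_mem _ hxP)
    have hYadj : (ι F y : UniversalEnvelopingAlgebra F L) ∈
        Algebra.adjoin F (ι F '' (M : Set L)) :=
      Algebra.subset_adjoin (Set.mem_image_of_mem _ hyM)
    refine ⟨(ι F x)^a, pow_mem hXadj a, (ι F y)^b, pow_mem hYadj b,
           (ι F x)^c, pow_mem hXadj c, ?_⟩
    rw [mul_assoc]
end Backward


/-- A plus-minus pair of a Lie algebra L: subalgebras P, M with P+M ≠ L and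
U(L) = U(P)·U(M)·U(P), where U(P), U(M) denote the subalgebras of U(L) generated by
the images of P, M. -/
def IsPlusMinusPair (F : Type*) [Field F] (L : Type*) [LieRing L] [LieAlgebra F L]
    (P M : LieSubalgebra F L) : Prop :=
  P.toSubmodule ⊔ M.toSubmodule ≠ ⊤ ∧
    Submodule.span F
      {u : UniversalEnvelopingAlgebra F L |
        ∃ p ∈ Algebra.adjoin F (ι F '' (P : Set L)),
          ∃ m ∈ Algebra.adjoin F (ι F '' (M : Set L)),
            ∃ q ∈ Algebra.adjoin F (ι F '' (P : Set L)), u = p * m * q} = ⊤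


/-- a three-dimensional Lie algebra has a plus-minus pair iff it is
generated by two elements. -/
theorem stmt_14 (F : Type*) [Field F] [CharZero F]
    (L : Type*) [LieRing L] [LieAlgebra F L] [Module.Finite F L]
    (hdim : Module.finrank F L = 3) :
    (∃ P M : LieSubalgebra F L, IsPlusMinusPair F L P M) ↔
      ∃ x y : L, LieSubalgebra.lieSpan F L {x, y} = ⊤ := by
  constructor
  · rintro ⟨P, M, hpair⟩
    exact forward_main hdim P M hpair.1 hpair.2
  · rintro ⟨x, y, hgen⟩
    obtain ⟨P, M, h1, h2⟩ := backward_main hdim x y hgen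
    exact ⟨P, M, h1, h2⟩
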